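/- arXiv:2306.17714 — 4 statements merged into one kernel-verified Lean document; each statement's English description precedes it below -/
import Mathlib

section
/- Let R ⊂ ℤ^d be a finite set of admissible steps. The following are equivalent: (a) for any x, y ∈ ℤ^d, all admissible paths from x to y (paths whose increments lie in R) have the same number of steps; (b) there exists a vector û ∈ ℝ^d such that û · z = 1 for all z ∈ R. -/
/-!
If `û · z = 1` on `R`, then `û · p i` grows by exactly one per step, so every admissible path from
`x` to `y` has length `û · y - û · x`. Conversely, if lengths are unique then every integer
relation `∑ c_z z = 0` among the steps has `∑ c_z = 0`: the positive and negative parts of `c`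
give two paths from `0` to the same point. So the number of steps is a well-defined homomorphism
on the subgroup generated by `R`, and since `ℝ` is divisible, hence an injective `ℤ`-module, it
extends to a homomorphism `ℤ^d → ℝ`, which is the dot product with some `û`.
-/

open Finset

theorem exists_addMonoidHom_comp_eq_of_ker_le {M N Q : Type*} [AddCommGroup M] [AddCommGroup N]
    [AddCommGroup Q] [DivisibleBy Q ℤ] (f : M →+ N) (g : M →+ Q) (h : f.ker ≤ g.ker) :
    ∃ φ : N →+ Q, φ.comp f = g := by
  obtain ⟨φ, hφ⟩ := (Module.Baer.of_divisible Q).extension_property_addMonoidHom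
    (QuotientAddGroup.kerLift f) (QuotientAddGroup.kerLift_injective f)
    (QuotientAddGroup.lift f.ker g h)
  exact ⟨φ, AddMonoidHom.ext fun x => DFunLike.congr_fun hφ (x : M ⧸ f.ker)⟩

theorem AddMonoidHom.apply_eq_sum_zsmul_single {ι M : Type*} [Fintype ι] [DecidableEq ι]
    [AddCommGroup M] (φ : (ι → ℤ) →+ M) (z : ι → ℤ) :
    φ z = ∑ i, z i • φ (Pi.single i 1) := by
  conv_lhs => rw [← univ_sum_single z]
  rw [map_sum]
  refine sum_congr rfl fun i _ => ?_
  rw [← map_zsmul, ← Pi.single_smul, smul_eq_mul, mul_one]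

section Paths

variable {G : Type*} [AddCommGroup G] {R : Set G}

def PathLengthsUnique (R : Set G) : Prop :=
  ∀ (x y : G) (k l : ℕ) (p q : ℕ → G),
    p 0 = x → p k = y → (∀ i < k, p (i + 1) - p i ∈ R) →
    q 0 = x → q l = y → (∀ i < l, q (i + 1) - q i ∈ R) → k = l

theorem map_path_eq_add_nsmul {M : Type*} [AddMonoid M] (f : G →+ M) {c : M}
    (hf : ∀ z ∈ R, f z = c) (p : ℕ → G) {k : ℕ} (hp : ∀ i < k, p (i + 1) - p i ∈ R) :
    f (p k) = f (p 0) + k • c := by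
  induction k with
  | zero => simp
  | succ k ih =>
    rw [← add_sub_cancel (p k) (p (k + 1)), map_add, hf _ (hp k k.lt_succ_self),
      ih fun i hi => hp i (hi.trans k.lt_succ_self), succ_nsmul, add_assoc]

theorem pathLengthsUnique_of_map_eq_one {M : Type*} [AddGroupWithOne M] [CharZero M]
    (f : G →+ M) (hf : ∀ z ∈ R, f z = 1) : PathLengthsUnique R := by
  rintro x y k l p q rfl rfl hp hq₀ hql hq
  have hk := map_path_eq_add_nsmul f hf p hp
  have hl := map_path_eq_add_nsmul f hf q hq
  rw [hq₀, hql, hk, add_right_inj, nsmul_one, nsmul_one] at hl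
  exact_mod_cast hl

theorem exists_path_of_list {L : List G} (hL : ∀ z ∈ L, z ∈ R) :
    ∃ p : ℕ → G, p 0 = 0 ∧ p L.length = L.sum ∧ ∀ i < L.length, p (i + 1) - p i ∈ R :=
  ⟨fun i => (L.take i).sum, by simp, by simp, fun i hi => by
    simpa [List.sum_take_succ L i hi] using hL _ (L.getElem_mem hi)⟩

theorem PathLengthsUnique.card_eq_of_sum_eq (h : PathLengthsUnique R)
    {s t : Multiset G} (hs : ∀ z ∈ s, z ∈ R) (ht : ∀ z ∈ t, z ∈ R) (hst : s.sum = t.sum) :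
    Multiset.card s = Multiset.card t := by
  obtain ⟨p, hp₀, hpk, hp⟩ := exists_path_of_list (L := s.toList) (by simpa using hs)
  obtain ⟨q, hq₀, hql, hq⟩ := exists_path_of_list (L := t.toList) (by simpa using ht)
  rw [← Multiset.length_toList, ← Multiset.length_toList t]
  refine h 0 s.sum _ _ p q hp₀ (by simpa using hpk) hp hq₀ ?_ hq
  rw [hql, Multiset.sum_toList, hst]

theorem PathLengthsUnique.sum_eq_of_sum_nsmul_eq (h : PathLengthsUnique R)
    {ι : Type*} [Fintype ι] {v : ι → G} (hv : ∀ i, v i ∈ R) {a b : ι → ℕ}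
    (hab : ∑ i, a i • v i = ∑ i, b i • v i) : ∑ i, a i = ∑ i, b i := by
  have key := h.card_eq_of_sum_eq (s := ∑ i, Multiset.replicate (a i) (v i))
    (t := ∑ i, Multiset.replicate (b i) (v i)) ?_ ?_ (by simpa [Multiset.sum_sum] using hab)
  · simpa [Multiset.card_sum] using key
  all_goals
    intro z hz
    obtain ⟨i, -, hi⟩ := Multiset.mem_sum.1 hz
    exact Multiset.eq_of_mem_replicate hi ▸ hv i

theorem PathLengthsUnique.sum_eq_zero_of_sum_zsmul_eq_zero (h : PathLengthsUnique R)
    {ι : Type*} [Fintype ι] {v : ι → G} (hv : ∀ i, v i ∈ R) {c : ι → ℤ}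
    (hc : ∑ i, c i • v i = 0) : ∑ i, c i = 0 := by
  have key := h.sum_eq_of_sum_nsmul_eq hv (a := fun i => (c i).toNat) (b := fun i => (-c i).toNat)
    (by
      rw [← sub_eq_zero, ← sum_sub_distrib, ← hc]
      refine sum_congr rfl fun i _ => ?_
      rw [← natCast_zsmul, ← natCast_zsmul, ← sub_smul, Int.toNat_sub_toNat_neg])
  have hc' : ∑ i, c i = ∑ i, (((c i).toNat : ℤ) - (-c i).toNat) := by
    simp only [Int.toNat_sub_toNat_neg]
  rw [hc', sum_sub_distrib, sub_eq_zero]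
  exact_mod_cast key

end Paths

theorem pathLengthsUnique_iff_exists_addMonoidHom {G : Type*} [AddCommGroup G] (R : Finset G) :
    PathLengthsUnique (R : Set G) ↔ ∃ f : G →+ ℝ, ∀ z ∈ R, f z = 1 := by
  classical
  refine ⟨fun h => ?_, fun ⟨f, hf⟩ => pathLengthsUnique_of_map_eq_one f hf⟩
  let steps := (Fintype.linearCombination ℤ fun z : R => (z : G)).toAddMonoidHom
  let length := (Fintype.linearCombination ℤ fun _ : R => (1 : ℝ)).toAddMonoidHom
  have hker : steps.ker ≤ length.ker := fun c hc => by
    simp only [steps, length, AddMonoidHom.mem_ker, LinearMap.toAddMonoidHom_coe,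
      Fintype.linearCombination_apply] at hc ⊢
    rw [← sum_smul, h.sum_eq_zero_of_sum_zsmul_eq_zero (fun z : R => z.2) hc, zero_smul]
  obtain ⟨φ, hφ⟩ := exists_addMonoidHom_comp_eq_of_ker_le steps length hker
  refine ⟨φ, fun z hz => ?_⟩
  simpa [steps, length, Fintype.linearCombination_apply_single] using
    DFunLike.congr_fun hφ (Pi.single ⟨z, hz⟩ 1)

theorem same_length_iff_exists_uhat_general {d : ℕ} (R : Finset (Fin d → ℤ)) :
    (∀ (x y : Fin d → ℤ) (k l : ℕ) (p q : ℕ → Fin d → ℤ),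
        p 0 = x → p k = y → (∀ i < k, p (i + 1) - p i ∈ R) →
        q 0 = x → q l = y → (∀ i < l, q (i + 1) - q i ∈ R) → k = l)
    ↔ ∃ u : Fin d → ℝ, ∀ z ∈ R, ∑ i, u i * (z i : ℝ) = 1 := by
  refine (pathLengthsUnique_iff_exists_addMonoidHom R).trans
    ⟨fun ⟨φ, hφ⟩ => ⟨fun i => φ (Pi.single i 1), fun z hz => ?_⟩, fun ⟨u, hu⟩ => ?_⟩
  · rw [← hφ z hz, φ.apply_eq_sum_zsmul_single z]
    simp [mul_comm]
  · refine ⟨AddMonoidHom.mk' (fun z => ∑ i, u i * (z i : ℝ)) fun a b => ?_, hu⟩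
    simp [mul_add, sum_add_distrib]

/-- Let `R ⊂ ℤ^d` be a nonempty finite set of admissible steps.  The following are equivalent:
(a) for any `x, y ∈ ℤ^d`, all admissible paths from `x` to `y` (paths whose increments lie in
`R`) have the same number of steps; (b) there exists a vector `û ∈ ℝ^d` such that `û · z = 1`
for all `z ∈ R`. -/
theorem same_length_iff_exists_uhat {d : ℕ} (R : Finset (Fin d → ℤ)) (hR : R.Nonempty) :
    (∀ (x y : Fin d → ℤ) (k l : ℕ) (p q : ℕ → Fin d → ℤ),
        p 0 = x → p k = y → (∀ i < k, p (i + 1) - p i ∈ R) →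
        q 0 = x → q l = y → (∀ i < l, q (i + 1) - q i ∈ R) → k = l)
    ↔ ∃ u : Fin d → ℝ, ∀ z ∈ R, ∑ i, u i * (z i : ℝ) = 1 :=
  same_length_iff_exists_uhat_general R
end

section
/- Fix β ∈ (0,∞), a finite step set R ⊂ ℤ^d, kernel p, and potential V. For sites x, v with v - x expressible as a sum of steps in R, define the unrestricted partition function Z(x→v) summing exp(-β Σ V) over all paths from x that first hit v at their last step. For a hyperplane slab L = {v : t ≤ v·û < t + M}, a tilt h ∈ ℝ^d, and ε ≥ 0, define Z_{x,t} = Σ_{v ∈ L, v reachable from x} Z(x→v) e^{β h·(v-x) - ε|v|_1} and F_{x,t} = β^{-1} log Z_{x,t}. Define B_t(x, x+z) = F_{x,t} - F_{x+z,t} - h·z for z ∈ R. Then for all x with t > max{x·û, (x+z)·û : z ∈ R}: Σ_{z∈R} p(z) exp(-β B_t(x,x+z) - β V(x,z)) = 1. -/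
open Finset

attribute [local instance] Classical.propDecidable

noncomputable section

/-- Position of an admissible path after `k` steps. -/
def pos {d n : ℕ} (x : Fin d → ℤ) (s : Fin n → (Fin d → ℤ)) (k : ℕ) : Fin d → ℤ :=
  x + ∑ i ∈ Finset.univ.filter (fun i : Fin n => (i : ℕ) < k), s i

/-- Weight of a path: product of kernel factors and Boltzmann factors for the potential. -/
def pathWeight {d n : ℕ} (p : (Fin d → ℤ) → ℝ) (β : ℝ)
    (V : (Fin d → ℤ) → (Fin d → ℤ) → ℝ) (x : Fin d → ℤ)
    (s : Fin n → (Fin d → ℤ)) : ℝ :=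
  ∏ i : Fin n, p (s i) * Real.exp (-β * V (pos x s (i : ℕ)) (s i))

/-- Total weight of the length-`n` admissible paths from `x` first hitting `v` at step `n`. -/
def firstHitZ {d : ℕ} (R : Finset (Fin d → ℤ)) (p : (Fin d → ℤ) → ℝ) (β : ℝ)
    (V : (Fin d → ℤ) → (Fin d → ℤ) → ℝ) (x v : Fin d → ℤ) (n : ℕ) : ℝ :=
  ∑ s ∈ Fintype.piFinset (fun _ : Fin n => R),
    if pos x s n = v ∧ ∀ k < n, pos x s k ≠ v then pathWeight p β V x s else 0

/-- Unrestricted-length point-to-point partition function `Z(x → v)`. -/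
def Zunr {d : ℕ} (R : Finset (Fin d → ℤ)) (p : (Fin d → ℤ) → ℝ) (β : ℝ)
    (V : (Fin d → ℤ) → (Fin d → ℤ) → ℝ) (x v : Fin d → ℤ) : ℝ :=
  ∑' n : ℕ, firstHitZ R p β V x v n

/-- Real inner product of a real vector with an integer vector. -/
def dotIZ {d : ℕ} (u : Fin d → ℝ) (v : Fin d → ℤ) : ℝ := ∑ i, u i * (v i : ℝ)

/-- `ℓ¹`-norm of an integer vector. -/
def l1 {d : ℕ} (v : Fin d → ℤ) : ℝ := ∑ i, |(v i : ℝ)|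

/-- Tilted point-to-slab partition function `Z_{w,t}`: sum over the sites `v` of the slab
`{v : t ≤ v·û < t + M}` of `Z(w → v) e^{β h·(v-w) - ε |v|₁}`. -/
def Ztilt {d : ℕ} (R : Finset (Fin d → ℤ)) (p : (Fin d → ℤ) → ℝ) (β : ℝ)
    (V : (Fin d → ℤ) → (Fin d → ℤ) → ℝ) (h uh : Fin d → ℝ) (t M ε : ℝ)
    (w : Fin d → ℤ) : ℝ :=
  ∑' v : Fin d → ℤ,
    if t ≤ dotIZ uh v ∧ dotIZ uh v < t + M then
      Zunr R p β V w v * Real.exp (β * dotIZ h (v - w) - ε * l1 v)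
    else 0

lemma pos_zero {d n : ℕ} (x : Fin d → ℤ) (s : Fin n → (Fin d → ℤ)) : pos x s 0 = x := by
  simp [pos]

lemma pos_succ {d n : ℕ} (x : Fin d → ℤ) (s : Fin (n + 1) → (Fin d → ℤ)) (k : ℕ) :
    pos x s (k + 1) = pos (x + s 0) (Fin.tail s) k := by
  unfold pos
  rw [Finset.sum_filter, Finset.sum_filter, Fin.sum_univ_succ]
  have h0 : ((0 : Fin (n+1)) : ℕ) < k + 1 := Nat.succ_pos k
  rw [if_pos h0, add_assoc]
  congr 1
  congr 1
  refine Finset.sum_congr rfl fun i _ => ?_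
  have : ((i.succ : Fin (n+1)) : ℕ) = (i : ℕ) + 1 := rfl
  simp [this, Fin.tail, Nat.succ_lt_succ_iff]

lemma pathWeight_succ {d n : ℕ} (p : (Fin d → ℤ) → ℝ) (β : ℝ)
    (V : (Fin d → ℤ) → (Fin d → ℤ) → ℝ) (x : Fin d → ℤ)
    (s : Fin (n + 1) → (Fin d → ℤ)) :
    pathWeight p β V x s
      = p (s 0) * Real.exp (-β * V x (s 0))
        * pathWeight p β V (x + s 0) (Fin.tail s) := by
  unfold pathWeight
  rw [Fin.prod_univ_succ]
  simp only [Fin.val_zero, pos_zero]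
  congr 1
  refine Finset.prod_congr rfl fun i _ => ?_
  have hc : ((i.succ : Fin (n+1)) : ℕ) = (i : ℕ) + 1 := rfl
  rw [hc, pos_succ]
  rfl

lemma firstHitZ_succ {d : ℕ} (R : Finset (Fin d → ℤ)) (p : (Fin d → ℤ) → ℝ) (β : ℝ)
    (V : (Fin d → ℤ) → (Fin d → ℤ) → ℝ) (x v : Fin d → ℤ) (n : ℕ) (hx : x ≠ v) :
    firstHitZ R p β V x v (n + 1)
      = ∑ z ∈ R, p z * Real.exp (-β * V x z) * firstHitZ R p β V (x + z) v n := by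
  unfold firstHitZ
  rw [show (Fintype.piFinset (fun _ : Fin (n+1) => R))
      = (R ×ˢ Fintype.piFinset (fun _ : Fin n => R)).map (Fin.consEquiv _).toEmbedding by
    ext s
    simp only [Finset.mem_map, Finset.mem_product, Fintype.mem_piFinset, Equiv.coe_toEmbedding]
    constructor
    · intro hs
      exact ⟨(s 0, Fin.tail s), ⟨hs 0, fun i => hs i.succ⟩, Fin.cons_self_tail s⟩
    · rintro ⟨⟨z, r⟩, ⟨hz, hr⟩, rfl⟩
      intro i
      refine Fin.cases ?_ (fun j => ?_) i
      · simpa [Fin.consEquiv] using hz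
      · simpa [Fin.consEquiv] using hr j]
  rw [Finset.sum_map, Finset.sum_product]
  simp only [Equiv.coe_toEmbedding]
  refine Finset.sum_congr rfl fun z hz => ?_
  rw [Finset.mul_sum]
  refine Finset.sum_congr rfl fun s hs => ?_
  have hcons0 : ((Fin.consEquiv fun _ : Fin (n+1) => Fin d → ℤ) (z, s)) 0 = z := rfl
  have hconst : Fin.tail ((Fin.consEquiv fun _ : Fin (n+1) => Fin d → ℤ) (z, s)) = s := by
    funext i; rfl
  have hposs : ∀ k : ℕ, pos x ((Fin.consEquiv fun _ : Fin (n+1) => Fin d → ℤ) (z, s)) (k + 1)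
      = pos (x + z) s k := by
    intro k
    rw [pos_succ, hcons0, hconst]
  have hcond : (pos x ((Fin.consEquiv fun _ : Fin (n+1) => Fin d → ℤ) (z, s)) (n+1) = v ∧
      ∀ k < n + 1, pos x ((Fin.consEquiv fun _ : Fin (n+1) => Fin d → ℤ) (z, s)) k ≠ v)
      ↔ (pos (x + z) s n = v ∧ ∀ k < n, pos (x + z) s k ≠ v) := by
    constructor
    · rintro ⟨h1, h2⟩
      refine ⟨by rwa [hposs] at h1, fun k hk => ?_⟩
      have := h2 (k + 1) (Nat.succ_lt_succ hk)
      rwa [hposs] at this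
    · rintro ⟨h1, h2⟩
      refine ⟨by rwa [hposs], fun k hk => ?_⟩
      cases k with
      | zero => rw [pos_zero]; exact hx
      | succ m => rw [hposs]; exact h2 m (Nat.lt_of_succ_lt_succ hk)
  rw [pathWeight_succ, hcons0, hconst]
  by_cases hc : pos (x + z) s n = v ∧ ∀ k < n, pos (x + z) s k ≠ v
  · rw [if_pos (hcond.mpr hc), if_pos hc, mul_assoc]
  · rw [if_neg (fun hh => hc (hcond.mp hh)), if_neg hc, mul_zero]

lemma firstHitZ_zero {d : ℕ} (R : Finset (Fin d → ℤ)) (p : (Fin d → ℤ) → ℝ) (β : ℝ)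
    (V : (Fin d → ℤ) → (Fin d → ℤ) → ℝ) (x v : Fin d → ℤ) (hx : x ≠ v) :
    firstHitZ R p β V x v 0 = 0 := by
  unfold firstHitZ
  refine Finset.sum_eq_zero fun s _ => ?_
  rw [if_neg]
  rintro ⟨h1, -⟩
  exact hx (by rwa [pos_zero] at h1)

lemma Zunr_step {d : ℕ} (R : Finset (Fin d → ℤ)) (p : (Fin d → ℤ) → ℝ) (β : ℝ)
    (V : (Fin d → ℤ) → (Fin d → ℤ) → ℝ) (x v : Fin d → ℤ) (hx : x ≠ v)
    (hsum : ∀ z ∈ R, Summable (fun n : ℕ => firstHitZ R p β V (x + z) v n)) :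
    Zunr R p β V x v = ∑ z ∈ R, p z * Real.exp (-β * V x z) * Zunr R p β V (x + z) v := by
  have hsucc : ∀ n : ℕ, firstHitZ R p β V x v (n + 1)
      = ∑ z ∈ R, p z * Real.exp (-β * V x z) * firstHitZ R p β V (x + z) v n :=
    fun n => firstHitZ_succ R p β V x v n hx
  have hg : Summable (fun n : ℕ => ∑ z ∈ R, p z * Real.exp (-β * V x z)
      * firstHitZ R p β V (x + z) v n) :=
    summable_sum fun z hz => ((hsum z hz).mul_left _)
  have hf1 : Summable (fun n : ℕ => firstHitZ R p β V x v (n + 1)) := by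
    simpa [hsucc] using hg
  have hf : Summable (fun n : ℕ => firstHitZ R p β V x v n) :=
    (summable_nat_add_iff 1).mp hf1
  unfold Zunr
  rw [Summable.tsum_eq_zero_add hf, firstHitZ_zero R p β V x v hx, zero_add]
  calc ∑' n : ℕ, firstHitZ R p β V x v (n + 1)
      = ∑' n : ℕ, ∑ z ∈ R, p z * Real.exp (-β * V x z) * firstHitZ R p β V (x + z) v n := by
        exact tsum_congr fun n => hsucc n
    _ = ∑ z ∈ R, ∑' n : ℕ, p z * Real.exp (-β * V x z) * firstHitZ R p β V (x + z) v n :=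
        Summable.tsum_finsetSum fun z hz => (hsum z hz).mul_left _
    _ = ∑ z ∈ R, p z * Real.exp (-β * V x z) * Zunr R p β V (x + z) v :=
        Finset.sum_congr rfl fun z hz => tsum_mul_left

lemma dotIZ_sub_add {d : ℕ} (u : Fin d → ℝ) (v x z : Fin d → ℤ) :
    dotIZ u (v - x) = dotIZ u (v - (x + z)) + dotIZ u z := by
  unfold dotIZ
  rw [← Finset.sum_add_distrib]
  refine Finset.sum_congr rfl fun i _ => ?_
  simp only [Pi.sub_apply, Pi.add_apply, Int.cast_sub, Int.cast_add]
  ring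

lemma Ztilt_step {d : ℕ} (R : Finset (Fin d → ℤ)) (p : (Fin d → ℤ) → ℝ) (β : ℝ)
    (V : (Fin d → ℤ) → (Fin d → ℤ) → ℝ) (h uh : Fin d → ℝ) (t M ε : ℝ)
    (x : Fin d → ℤ)
    (ht : dotIZ uh x < t)
    (hsum1 : ∀ z ∈ R, ∀ v : Fin d → ℤ,
      Summable (fun n : ℕ => firstHitZ R p β V (x + z) v n))
    (hsum2 : ∀ z ∈ R, Summable (fun v : Fin d → ℤ =>
      if t ≤ dotIZ uh v ∧ dotIZ uh v < t + M then
        Zunr R p β V (x + z) v * Real.exp (β * dotIZ h (v - (x + z)) - ε * l1 v)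
      else 0)) :
    Ztilt R p β V h uh t M ε x
      = ∑ z ∈ R, p z * Real.exp (β * dotIZ h z - β * V x z)
          * Ztilt R p β V h uh t M ε (x + z) := by
  unfold Ztilt
  have key : ∀ v : Fin d → ℤ,
      (if t ≤ dotIZ uh v ∧ dotIZ uh v < t + M then
        Zunr R p β V x v * Real.exp (β * dotIZ h (v - x) - ε * l1 v) else 0)
      = ∑ z ∈ R, p z * Real.exp (β * dotIZ h z - β * V x z) *
          (if t ≤ dotIZ uh v ∧ dotIZ uh v < t + M then
            Zunr R p β V (x + z) v * Real.exp (β * dotIZ h (v - (x + z)) - ε * l1 v) else 0) := by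
    intro v
    by_cases hc : t ≤ dotIZ uh v ∧ dotIZ uh v < t + M
    · have hxv : x ≠ v := by
        intro hxe
        rw [hxe] at ht
        exact absurd hc.1 (not_le.mpr ht)
      rw [if_pos hc]
      rw [Zunr_step R p β V x v hxv (fun z hz => hsum1 z hz v), Finset.sum_mul]
      refine Finset.sum_congr rfl fun z hz => ?_
      rw [if_pos hc, dotIZ_sub_add h v x z]
      have e : Real.exp (-β * V x z)
            * Real.exp (β * (dotIZ h (v - (x + z)) + dotIZ h z) - ε * l1 v)
          = Real.exp (β * dotIZ h z - β * V x z)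
            * Real.exp (β * dotIZ h (v - (x + z)) - ε * l1 v) := by
        rw [← Real.exp_add, ← Real.exp_add]
        congr 1
        ring
      calc p z * Real.exp (-β * V x z) * Zunr R p β V (x + z) v
            * Real.exp (β * (dotIZ h (v - (x + z)) + dotIZ h z) - ε * l1 v)
          = p z * Zunr R p β V (x + z) v * (Real.exp (-β * V x z)
            * Real.exp (β * (dotIZ h (v - (x + z)) + dotIZ h z) - ε * l1 v)) := by ring
        _ = p z * Zunr R p β V (x + z) v * (Real.exp (β * dotIZ h z - β * V x z)
            * Real.exp (β * dotIZ h (v - (x + z)) - ε * l1 v)) := by rw [e]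
        _ = p z * Real.exp (β * dotIZ h z - β * V x z) * (Zunr R p β V (x + z) v
            * Real.exp (β * dotIZ h (v - (x + z)) - ε * l1 v)) := by ring
    · rw [if_neg hc]
      refine (Finset.sum_eq_zero fun z hz => ?_).symm
      rw [if_neg hc, mul_zero]
  rw [tsum_congr key]
  rw [Summable.tsum_finsetSum (fun z hz => (hsum2 z hz).mul_left _)]
  exact Finset.sum_congr rfl fun z hz => tsum_mul_left

/-- With `F_{w,t} = β⁻¹ log Z_{w,t}` and `B_t(x, x+z) = F_{x,t} - F_{x+z,t} - h·z`, the
approximate Busemann function `B_t` satisfies the `β`-recovery property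
`Σ_{z ∈ R} p(z) exp(-β B_t(x,x+z) - β V(x,z)) = 1`, for every `x` strictly below the slab
(together with `x + z` for all `z ∈ R`). -/
theorem preBusemann_recovery {d : ℕ} (R : Finset (Fin d → ℤ))
    (p : (Fin d → ℤ) → ℝ)
    (hp : ∀ z ∈ R, 0 < p z ∧ p z ≤ 1) (hpsum : ∑ z ∈ R, p z = 1)
    (β : ℝ) (hβ : 0 < β) (ε : ℝ) (hε : 0 ≤ ε)
    (V : (Fin d → ℤ) → (Fin d → ℤ) → ℝ)
    (h uh : Fin d → ℝ) (t M : ℝ) (hM : 0 < M)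
    (x : Fin d → ℤ)
    (ht : dotIZ uh x < t ∧ ∀ z ∈ R, dotIZ uh (x + z) < t)
    (hsum1 : ∀ z ∈ R, ∀ v : Fin d → ℤ,
      Summable (fun n : ℕ => firstHitZ R p β V (x + z) v n))
    (hsum2 : ∀ z ∈ R, Summable (fun v : Fin d → ℤ =>
      if t ≤ dotIZ uh v ∧ dotIZ uh v < t + M then
        Zunr R p β V (x + z) v * Real.exp (β * dotIZ h (v - (x + z)) - ε * l1 v)
      else 0))
    (hpos : ∀ z ∈ R, 0 < Ztilt R p β V h uh t M ε (x + z)) :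
    ∑ z ∈ R, p z * Real.exp
        (-β * (β⁻¹ * Real.log (Ztilt R p β V h uh t M ε x)
              - β⁻¹ * Real.log (Ztilt R p β V h uh t M ε (x + z)) - dotIZ h z)
          - β * V x z) = 1 := by
  have hstep : Ztilt R p β V h uh t M ε x
      = ∑ z ∈ R, p z * Real.exp (β * dotIZ h z - β * V x z)
          * Ztilt R p β V h uh t M ε (x + z) :=
    Ztilt_step R p β V h uh t M ε x ht.1 hsum1 hsum2
  have hRne : R.Nonempty := by
    rcases R.eq_empty_or_nonempty with he | hn
    · rw [he] at hpsum; simp at hpsum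
    · exact hn
  have hZxpos : 0 < Ztilt R p β V h uh t M ε x := by
    rw [hstep]
    exact Finset.sum_pos
      (fun z hz => mul_pos (mul_pos (hp z hz).1 (Real.exp_pos _)) (hpos z hz)) hRne
  have hterm : ∀ z ∈ R, p z * Real.exp
        (-β * (β⁻¹ * Real.log (Ztilt R p β V h uh t M ε x)
              - β⁻¹ * Real.log (Ztilt R p β V h uh t M ε (x + z)) - dotIZ h z)
          - β * V x z)
      = p z * Real.exp (β * dotIZ h z - β * V x z) * Ztilt R p β V h uh t M ε (x + z)
          / Ztilt R p β V h uh t M ε x := by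
    intro z hz
    have harg : -β * (β⁻¹ * Real.log (Ztilt R p β V h uh t M ε x)
              - β⁻¹ * Real.log (Ztilt R p β V h uh t M ε (x + z)) - dotIZ h z)
          - β * V x z
        = (β * dotIZ h z - β * V x z) + Real.log (Ztilt R p β V h uh t M ε (x + z))
          - Real.log (Ztilt R p β V h uh t M ε x) := by
      field_simp
      ring
    rw [harg, Real.exp_sub, Real.exp_add, Real.exp_log (hpos z hz), Real.exp_log hZxpos]
    ring
  rw [Finset.sum_congr rfl hterm, ← Finset.sum_div,
    div_eq_one_iff_eq (ne_of_gt hZxpos)]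
  exact hstep.symm

end
end

section
/- Under the hypotheses of the previous statement (nonnegative potential, existence of a zero-weight loop at 0, and B(x,y) = F(x→0) - F(y→0)), any infinite path X_{0:∞} started at 0 satisfying B(X_i, X_{i+1}) + V(X_i, X_{i+1}-X_i) = 0 for all i ≥ 0 has V(X_i, X_{i+1}-X_i) = 0 for all i ≥ 0. -/
noncomputable section

/-- Zero-temperature passage time `F(x → y)`: supremum over all admissible paths (of any
length) from `x` to `y` of minus the total potential along the path. -/
def Fpt {d : ℕ} (R : Finset (Fin d → ℤ))
    (V : (Fin d → ℤ) → (Fin d → ℤ) → ℝ) (x y : Fin d → ℤ) : ℝ :=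
  sSup {w : ℝ | ∃ (n : ℕ) (π : ℕ → Fin d → ℤ), π 0 = x ∧ π n = y ∧
    (∀ i < n, π (i + 1) - π i ∈ R) ∧
    w = -∑ i ∈ Finset.range n, V (π i) (π (i + 1) - π i)}

/-- Under the hypotheses of the previous statement (nonnegative potential, a zero-weight loop
at `0`, reachability within the group generated by `R`), with
`B(x,y) = F(x → 0) - F(y → 0)`: any infinite admissible path `X` started at `0` satisfying
`B(X_i, X_{i+1}) + V(X_i, X_{i+1} - X_i) = 0` for all `i` has
`V(X_i, X_{i+1} - X_i) = 0` for all `i`. -/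
theorem trapped_path_has_zero_potential {d : ℕ}
    (R : Finset (Fin d → ℤ)) (hR : R.Nonempty)
    (V : (Fin d → ℤ) → (Fin d → ℤ) → ℝ)
    (hV : ∀ x z : Fin d → ℤ, 0 ≤ V x z)
    (hloop : ∃ (k : ℕ) (π : ℕ → Fin d → ℤ), 1 ≤ k ∧ π 0 = 0 ∧ π k = 0 ∧
      (∀ i < k, π (i + 1) - π i ∈ R) ∧ ∀ i < k, V (π i) (π (i + 1) - π i) = 0)
    (hreach : ∀ x y : Fin d → ℤ,
      x ∈ AddSubgroup.closure (R : Set (Fin d → ℤ)) →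
      y ∈ AddSubgroup.closure (R : Set (Fin d → ℤ)) →
      ∃ (n : ℕ) (π : ℕ → Fin d → ℤ), π 0 = x ∧ π n = y ∧
        ∀ i < n, π (i + 1) - π i ∈ R)
    (X : ℕ → Fin d → ℤ) (hX0 : X 0 = 0)
    (hXstep : ∀ i, X (i + 1) - X i ∈ R)
    (hXrec : ∀ i, (Fpt R V (X i) 0 - Fpt R V (X (i + 1)) 0)
      + V (X i) (X (i + 1) - X i) = 0) :
    ∀ i, V (X i) (X (i + 1) - X i) = 0 := by
  intro i
  -- The set defining Fpt with target 0 is bounded above by 0.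
  have hbdd : ∀ x : Fin d → ℤ, ∀ w ∈ {w : ℝ | ∃ (n : ℕ) (π : ℕ → Fin d → ℤ),
      π 0 = x ∧ π n = (0 : Fin d → ℤ) ∧ (∀ i < n, π (i + 1) - π i ∈ R) ∧
      w = -∑ i ∈ Finset.range n, V (π i) (π (i + 1) - π i)}, w ≤ 0 := by
    rintro x w ⟨n, π, -, -, -, rfl⟩
    simp only [neg_nonpos]
    exact Finset.sum_nonneg fun j _ => hV _ _
  have hBdd : ∀ x : Fin d → ℤ, BddAbove {w : ℝ | ∃ (n : ℕ) (π : ℕ → Fin d → ℤ),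
      π 0 = x ∧ π n = (0 : Fin d → ℤ) ∧ (∀ i < n, π (i + 1) - π i ∈ R) ∧
      w = -∑ i ∈ Finset.range n, V (π i) (π (i + 1) - π i)} :=
    fun x => ⟨0, hbdd x⟩
  -- X k lies in the subgroup generated by R.
  have hmem : ∀ k, X k ∈ AddSubgroup.closure (R : Set (Fin d → ℤ)) := by
    intro k
    induction k with
    | zero => rw [hX0]; exact zero_mem _
    | succ k ih =>
      have : X (k + 1) = X k + (X (k + 1) - X k) := by ring
      rw [this]
      exact add_mem ih (AddSubgroup.subset_closure (hXstep k))
  -- Fpt (X n) 0 ≤ 0 for any n.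
  have hle : ∀ n, Fpt R V (X n) 0 ≤ 0 := by
    intro n
    obtain ⟨m, π, h0, hm, hstep⟩ := hreach (X n) 0 (hmem n) (zero_mem _)
    exact csSup_le ⟨_, m, π, h0, hm, hstep, rfl⟩ (hbdd (X n))
  -- Fpt 0 0 ≥ 0 (empty path).
  have hge : (0 : ℝ) ≤ Fpt R V 0 0 := by
    apply le_csSup (hBdd 0)
    exact ⟨0, fun _ => 0, rfl, rfl, fun j hj => absurd hj (Nat.not_lt_zero j), by simp⟩
  -- Telescoping sum.
  have hsum : ∀ n, ∑ j ∈ Finset.range n, V (X j) (X (j + 1) - X j)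
      = Fpt R V (X n) 0 - Fpt R V (X 0) 0 := by
    intro n
    have : ∀ j, V (X j) (X (j + 1) - X j)
        = Fpt R V (X (j + 1)) 0 - Fpt R V (X j) 0 := by
      intro j; have := hXrec j; linarith
    simp_rw [this]
    exact Finset.sum_range_sub (fun j => Fpt R V (X j) 0) n
  have hsum' : ∑ j ∈ Finset.range (i + 1), V (X j) (X (j + 1) - X j) ≤ 0 := by
    rw [hsum, hX0]
    linarith [hle (i + 1), hge]
  have hzero : ∑ j ∈ Finset.range (i + 1), V (X j) (X (j + 1) - X j) = 0 :=
    le_antisymm hsum' (Finset.sum_nonneg fun j _ => hV _ _)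
  exact (Finset.sum_eq_zero_iff_of_nonneg fun j _ => hV _ _).mp hzero i
    (Finset.self_mem_range_succ i)

end
end

section
/- Let X_{0:∞} be a semi-infinite restricted-length geodesic (for each n, X_{0:n} minimizes Σ_{i<n} V(x_i, x_{i+1}-x_i) over all admissible length-n paths from X_0 to X_n). Fix k and u such that u - X_0 is reachable in exactly k steps, and suppose for all large n there is a length-(n-k) path from u to X_n. Let F(u, X_n, n-k) = sup over length-(n-k) paths from u to X_n of Σ(-V). Then the sequence F(u, X_n, n-k) - F(X_0, X_n, n) is nondecreasing in n and bounded above by -F(X_0, u, k); hence the limit B(u, k) := lim_n [F(u, X_n, n-k) - F(X_0, X_n, n)] exists and is finite. -/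
noncomputable section

def Fres {d : ℕ} (R : Finset (Fin d → ℤ))
    (V : (Fin d → ℤ) → (Fin d → ℤ) → ℝ) (x y : Fin d → ℤ) (m : ℕ) : ℝ :=
  sSup {w : ℝ | ∃ π : ℕ → Fin d → ℤ, π 0 = x ∧ π m = y ∧
    (∀ i < m, π (i + 1) - π i ∈ R) ∧
    w = -∑ i ∈ Finset.range m, V (π i) (π (i + 1) - π i)}

lemma Fres_bddAbove {d : ℕ} (R : Finset (Fin d → ℤ))
    (V : (Fin d → ℤ) → (Fin d → ℤ) → ℝ) (x y : Fin d → ℤ) (m : ℕ) :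
    BddAbove {w : ℝ | ∃ π : ℕ → Fin d → ℤ, π 0 = x ∧ π m = y ∧
      (∀ i < m, π (i + 1) - π i ∈ R) ∧
      w = -∑ i ∈ Finset.range m, V (π i) (π (i + 1) - π i)} := by
  classical
  set st : (Fin m → R) → ℕ → (Fin d → ℤ) :=
    fun s j => if h : j < m then (s ⟨j, h⟩ : Fin d → ℤ) else 0 with hst
  set g : (Fin m → R) → ℝ :=
    fun s => -∑ i ∈ Finset.range m,
      V (x + ∑ j ∈ Finset.range i, st s j) (st s i) with hg
  refine BddAbove.mono ?_ (Set.Finite.bddAbove (Set.finite_range g))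
  rintro w ⟨π, h0, hm, hR, rfl⟩
  refine ⟨fun i => ⟨π (i + 1) - π i, hR i i.2⟩, ?_⟩
  simp only [hg]
  congr 1
  refine Finset.sum_congr rfl ?_
  intro i hi
  rw [Finset.mem_range] at hi
  have hsti : ∀ j < m, st (fun i : Fin m => (⟨π (i + 1) - π i, hR i i.2⟩ : R)) j
      = π (j + 1) - π j := by
    intro j hj
    simp [hst, hj]
  have hpath : x + ∑ j ∈ Finset.range i,
      st (fun i : Fin m => (⟨π (i + 1) - π i, hR i i.2⟩ : R)) j = π i := by
    rw [Finset.sum_congr rfl (fun j hj => hsti j (lt_of_lt_of_le (Finset.mem_range.mp hj) hi.le))]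
    rw [Finset.sum_range_sub (f := π)]
    rw [h0]; abel
  rw [hpath, hsti i hi]

lemma le_Fres {d : ℕ} {R : Finset (Fin d → ℤ)}
    {V : (Fin d → ℤ) → (Fin d → ℤ) → ℝ} {x y : Fin d → ℤ} {m : ℕ}
    (π : ℕ → Fin d → ℤ) (h0 : π 0 = x) (hm : π m = y)
    (hR : ∀ i < m, π (i + 1) - π i ∈ R) :
    -∑ i ∈ Finset.range m, V (π i) (π (i + 1) - π i) ≤ Fres R V x y m :=
  le_csSup (Fres_bddAbove R V x y m) ⟨π, h0, hm, hR, rfl⟩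

lemma Fres_le {d : ℕ} {R : Finset (Fin d → ℤ)}
    {V : (Fin d → ℤ) → (Fin d → ℤ) → ℝ} {x y : Fin d → ℤ} {m : ℕ} {b : ℝ}
    (hne : ∃ π : ℕ → Fin d → ℤ, π 0 = x ∧ π m = y ∧ ∀ i < m, π (i + 1) - π i ∈ R)
    (hb : ∀ π : ℕ → Fin d → ℤ, π 0 = x → π m = y →
      (∀ i < m, π (i + 1) - π i ∈ R) →
      -∑ i ∈ Finset.range m, V (π i) (π (i + 1) - π i) ≤ b) :
    Fres R V x y m ≤ b := by
  obtain ⟨π, h0, hm, hR⟩ := hne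
  refine csSup_le ⟨_, π, h0, hm, hR, rfl⟩ ?_
  rintro w ⟨π', h0', hm', hR', rfl⟩
  exact hb π' h0' hm' hR'

/-- Let `X` be a semi-infinite restricted-length geodesic.  Fix `k` and `u` such that `u` is
reachable from `X 0` in exactly `k` steps, and suppose that for all large `n` there is a
length-`(n-k)` admissible path from `u` to `X n`.  Then the sequence
`F(u, X_n, n-k) - F(X_0, X_n, n)` is nondecreasing in `n` (for large `n`), bounded above by
`-F(X_0, u, k)`, and hence converges to a finite limit. -/
theorem busemann_limit_along_geodesic {d : ℕ} (R : Finset (Fin d → ℤ))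
    (V : (Fin d → ℤ) → (Fin d → ℤ) → ℝ)
    (X : ℕ → Fin d → ℤ) (hX : ∀ i, X (i + 1) - X i ∈ R)
    (hgeo : ∀ (n : ℕ) (π : ℕ → Fin d → ℤ), π 0 = X 0 → π n = X n →
      (∀ i < n, π (i + 1) - π i ∈ R) →
      ∑ i ∈ Finset.range n, V (X i) (X (i + 1) - X i) ≤
        ∑ i ∈ Finset.range n, V (π i) (π (i + 1) - π i))
    (k : ℕ) (u : Fin d → ℤ)
    (hku : ∃ π : ℕ → Fin d → ℤ, π 0 = X 0 ∧ π k = u ∧ ∀ i < k, π (i + 1) - π i ∈ R)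
    (N : ℕ) (hkN : k ≤ N)
    (hreach : ∀ n, N ≤ n → ∃ π : ℕ → Fin d → ℤ, π 0 = u ∧ π (n - k) = X n ∧
      ∀ i < n - k, π (i + 1) - π i ∈ R) :
    (∀ n, N ≤ n →
      Fres R V u (X n) (n - k) - Fres R V (X 0) (X n) n ≤
        Fres R V u (X (n + 1)) (n + 1 - k) - Fres R V (X 0) (X (n + 1)) (n + 1)) ∧
    (∀ n, N ≤ n →
      Fres R V u (X n) (n - k) - Fres R V (X 0) (X n) n ≤ -(Fres R V (X 0) u k)) ∧
    (∃ b : ℝ, Filter.Tendsto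
      (fun n => Fres R V u (X n) (n - k) - Fres R V (X 0) (X n) n)
      Filter.atTop (nhds b)) := by
  classical
  -- value of F along the geodesic
  have hFX : ∀ n, Fres R V (X 0) (X n) n
      = -∑ i ∈ Finset.range n, V (X i) (X (i + 1) - X i) := by
    intro n
    refine le_antisymm ?_ (le_Fres X rfl rfl fun i _ => hX i)
    exact Fres_le ⟨X, rfl, rfl, fun i _ => hX i⟩
      (fun π h0 hm hR => neg_le_neg (hgeo n π h0 hm hR))
  -- monotonicity
  have hmono : ∀ n, N ≤ n →
      Fres R V u (X n) (n - k) - Fres R V (X 0) (X n) n ≤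
        Fres R V u (X (n + 1)) (n + 1 - k) - Fres R V (X 0) (X (n + 1)) (n + 1) := by
    intro n hn
    set m := n - k with hmdef
    have hm1 : n + 1 - k = m + 1 := by omega
    rw [hm1, hFX n, hFX (n + 1), Finset.sum_range_succ]
    have key : Fres R V u (X n) m
        ≤ Fres R V u (X (n + 1)) (m + 1) + V (X n) (X (n + 1) - X n) := by
      refine Fres_le (hreach n hn) ?_
      intro π h0 hm hR
      set π' : ℕ → Fin d → ℤ := fun i => if i ≤ m then π i else X (n + 1) with hπ'
      have heq : ∀ i ≤ m, π' i = π i := fun i hi => by simp [hπ', hi]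
      have h0' : π' 0 = u := by rw [heq 0 (Nat.zero_le _), h0]
      have hmtop : π' (m + 1) = X (n + 1) := by simp [hπ']
      have hR' : ∀ i < m + 1, π' (i + 1) - π' i ∈ R := by
        intro i hi
        rcases Nat.lt_succ_iff_lt_or_eq.mp hi with h | rfl
        · rw [heq (i + 1) h, heq i h.le]; exact hR i h
        · rw [hmtop, heq _ le_rfl, hm]; exact hX n
      have hle := le_Fres (V := V) π' h0' hmtop hR'
      have hsum : ∑ i ∈ Finset.range (m + 1), V (π' i) (π' (i + 1) - π' i)
          = ∑ i ∈ Finset.range m, V (π i) (π (i + 1) - π i)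
            + V (X n) (X (n + 1) - X n) := by
        rw [Finset.sum_range_succ]
        congr 1
        · refine Finset.sum_congr rfl fun i hi => ?_
          rw [Finset.mem_range] at hi
          rw [heq i hi.le, heq (i + 1) hi]
        · rw [hmtop, heq m le_rfl, hm]
      rw [hsum] at hle
      linarith
    linarith
  -- upper bound
  have hbdd : ∀ n, N ≤ n →
      Fres R V u (X n) (n - k) - Fres R V (X 0) (X n) n ≤ -(Fres R V (X 0) u k) := by
    intro n hn
    have hkn : k ≤ n := le_trans hkN hn
    set m := n - k with hmdef
    have hnkm : n = k + m := by omega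
    have h1 : Fres R V (X 0) u k
        ≤ Fres R V (X 0) (X n) n - Fres R V u (X n) m := by
      refine Fres_le hku ?_
      intro ρ hρ0 hρk hρR
      have h2 : Fres R V u (X n) m
          ≤ Fres R V (X 0) (X n) n + ∑ i ∈ Finset.range k, V (ρ i) (ρ (i + 1) - ρ i) := by
        refine Fres_le (hreach n hn) ?_
        intro π h0 hm hR
        set σ : ℕ → Fin d → ℤ := fun i => if i ≤ k then ρ i else π (i - k) with hσ
        have hσlow : ∀ i ≤ k, σ i = ρ i := fun i hi => by simp [hσ, hi]
        have hσhigh : ∀ i, k ≤ i → σ i = π (i - k) := by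
          intro i hi
          rcases eq_or_lt_of_le hi with rfl | h
          · rw [hσlow _ le_rfl, hρk, Nat.sub_self, h0]
          · have hik : ¬ i ≤ k := not_le.mpr h
            simp [hσ, hik]
        have hσ0 : σ 0 = X 0 := by rw [hσlow 0 (Nat.zero_le _), hρ0]
        have hσn : σ n = X n := by
          rw [hσhigh n hkn, ← hmdef, hm]
        have hσR : ∀ i < n, σ (i + 1) - σ i ∈ R := by
          intro i hi
          by_cases hik : i < k
          · rw [hσlow (i + 1) hik, hσlow i hik.le]
            exact hρR i hik
          · push_neg at hik
            rw [hσhigh (i + 1) (le_trans hik (Nat.le_succ i)), hσhigh i hik]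
            have h1 : i + 1 - k = (i - k) + 1 := by omega
            rw [h1]
            exact hR (i - k) (by omega)
        have hle := le_Fres (V := V) σ hσ0 hσn hσR
        have hsum : ∑ i ∈ Finset.range n, V (σ i) (σ (i + 1) - σ i)
            = ∑ i ∈ Finset.range k, V (ρ i) (ρ (i + 1) - ρ i)
              + ∑ i ∈ Finset.range m, V (π i) (π (i + 1) - π i) := by
          rw [hnkm, Finset.sum_range_add]
          congr 1
          · refine Finset.sum_congr rfl fun i hi => ?_
            rw [Finset.mem_range] at hi
            rw [hσlow i hi.le, hσlow (i + 1) hi]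
          · refine Finset.sum_congr rfl fun i hi => ?_
            rw [hσhigh (k + i) (Nat.le_add_right _ _),
              hσhigh (k + i + 1) (by omega)]
            have e1 : k + i - k = i := by omega
            have e2 : k + i + 1 - k = i + 1 := by omega
            rw [e1, e2]
        rw [hsum] at hle
        linarith
      linarith
    linarith
  refine ⟨hmono, hbdd, ?_⟩
  set f : ℕ → ℝ := fun n => Fres R V u (X n) (n - k) - Fres R V (X 0) (X n) n with hf
  have hgmono : Monotone fun n => f (n + N) := by
    refine monotone_nat_of_le_succ fun n => ?_
    have := hmono (n + N) (Nat.le_add_left _ _)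
    simpa [hf, show n + 1 + N = n + N + 1 by omega] using this
  have hgbdd : BddAbove (Set.range fun n => f (n + N)) := by
    refine ⟨-(Fres R V (X 0) u k), ?_⟩
    rintro w ⟨n, rfl⟩
    exact hbdd (n + N) (Nat.le_add_left _ _)
  exact ⟨_, (Filter.tendsto_add_atTop_iff_nat N).mp (tendsto_atTop_ciSup hgmono hgbdd)⟩

end
end
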